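/- Let ν ≥ 3 and d ≥ 1. For ϑ = (ϑ₁,…,ϑ_d) ∈ ℝ^d define the ν×ν real symmetric matrix Δ(ϑ) with Δ(ϑ)_{jj} = 1 for j ∈ {1,…,ν−1}, Δ(ϑ)_{νν} = ν − 1 + 2∑_{s=1}^{d} (1 − cos ϑ_s), Δ(ϑ)_{jν} = Δ(ϑ)_{νj} = −1 for j ∈ {1,…,ν−1}, and all other entries 0. Set x = (ν + 4d)/2. Then: (a) for every ϑ ∈ ℝ^d, the number 1 is an eigenvalue of Δ(ϑ) of multiplicity at least ν − 2; (b) { λ ∈ ℝ : ∃ ϑ ∈ ℝ^d, det(Δ(ϑ) − λ·I) = 0 } = [0, x − √(x² − 4d)] ∪ {1} ∪ [ν, x + √(x² − 4d)]. -/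

import Mathlib

open Matrix Finset

noncomputable def pendantFiber (ν d : ℕ) (ϑ : Fin d → ℝ) : Matrix (Fin ν) (Fin ν) ℝ :=
  fun j k =>
    if j = k then
      (if (j : ℕ) < ν - 1 then 1
       else (ν : ℝ) - 1 + 2 * ∑ s : Fin d, (1 - Real.cos (ϑ s)))
    else if (j : ℕ) = ν - 1 ∨ (k : ℕ) = ν - 1 then -1 else 0

section Aux

variable {ν d : ℕ}

lemma entry_eq (ϑ : Fin d → ℝ) (lam : ℝ) (j k : Fin ν) :
    (pendantFiber ν d ϑ - lam • (1 : Matrix (Fin ν) (Fin ν) ℝ)) j k =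
      if j = k then
        (if (j : ℕ) < ν - 1 then 1
         else (ν : ℝ) - 1 + 2 * ∑ s : Fin d, (1 - Real.cos (ϑ s))) - lam
      else if (j : ℕ) = ν - 1 ∨ (k : ℕ) = ν - 1 then -1 else 0 := by
  simp only [Matrix.sub_apply, Matrix.smul_apply, Matrix.one_apply, pendantFiber, smul_eq_mul]
  split_ifs <;> ring

lemma mulVec_lt (hν : 3 ≤ ν) (ϑ : Fin d → ℝ) (lam : ℝ) (v : Fin ν → ℝ)
    (j : Fin ν) (hj : (j : ℕ) < ν - 1) :
    (pendantFiber ν d ϑ - lam • (1 : Matrix (Fin ν) (Fin ν) ℝ)).mulVec v j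
      = (1 - lam) * v j - v ⟨ν - 1, by omega⟩ := by
  classical
  set l : Fin ν := ⟨ν - 1, by omega⟩ with hl
  have hjne : j ≠ l := by
    intro h
    rw [h] at hj
    simp [hl] at hj
  rw [Matrix.mulVec, dotProduct]
  rw [← Finset.sum_subset (Finset.subset_univ ({j, l} : Finset (Fin ν)))]
  · rw [Finset.sum_pair hjne, entry_eq, entry_eq]
    have h1 : ¬ ((j:ℕ) = ν - 1 ∨ (l:ℕ) = ν - 1) → False := by
      intro h; exact h (Or.inr rfl)
    simp only [if_pos rfl, if_pos hj, if_neg hjne, if_true, or_true,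
      if_pos (Or.inr rfl : (j:ℕ) = ν - 1 ∨ (l:ℕ) = ν - 1)]
    ring
  · intro k _ hk
    simp only [Finset.mem_insert, Finset.mem_singleton, not_or] at hk
    rw [entry_eq, if_neg (fun h => hk.1 h.symm), if_neg, zero_mul]
    push_neg
    constructor
    · omega
    · intro h; exact hk.2 (Fin.ext (by simpa [hl] using h))

lemma mulVec_last (hν : 3 ≤ ν) (ϑ : Fin d → ℝ) (lam : ℝ) (v : Fin ν → ℝ) :
    (pendantFiber ν d ϑ - lam • (1 : Matrix (Fin ν) (Fin ν) ℝ)).mulVec v ⟨ν - 1, by omega⟩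
      = ((ν : ℝ) - 1 + 2 * ∑ s : Fin d, (1 - Real.cos (ϑ s)) - lam) * v ⟨ν - 1, by omega⟩
        - ∑ k ∈ Finset.univ.erase (⟨ν - 1, by omega⟩ : Fin ν), v k := by
  classical
  set l : Fin ν := ⟨ν - 1, by omega⟩ with hl
  rw [Matrix.mulVec, dotProduct]
  rw [← Finset.add_sum_erase _ _ (Finset.mem_univ l)]
  have h1 : (pendantFiber ν d ϑ - lam • (1 : Matrix (Fin ν) (Fin ν) ℝ)) l l
      = (ν : ℝ) - 1 + 2 * ∑ s : Fin d, (1 - Real.cos (ϑ s)) - lam := by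
    rw [entry_eq, if_pos rfl, if_neg (by simp [hl])]
  have h2 : ∀ k ∈ Finset.univ.erase l,
      (pendantFiber ν d ϑ - lam • (1 : Matrix (Fin ν) (Fin ν) ℝ)) l k * v k = -1 * v k := by
    intro k hk
    have hkl : k ≠ l := (Finset.mem_erase.mp hk).1
    rw [entry_eq, if_neg (fun h => hkl h.symm), if_pos (Or.inl rfl)]
  rw [h1, Finset.sum_congr rfl h2]
  simp only [neg_one_mul, Finset.sum_neg_distrib]
  ring

lemma det_iff (hν : 3 ≤ ν) (ϑ : Fin d → ℝ) (lam : ℝ) :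
    (pendantFiber ν d ϑ - lam • (1 : Matrix (Fin ν) (Fin ν) ℝ)).det = 0 ↔
      lam = 1 ∨ lam ^ 2 - ((ν : ℝ) + 2 * ∑ s : Fin d, (1 - Real.cos (ϑ s))) * lam
          + 2 * ∑ s : Fin d, (1 - Real.cos (ϑ s)) = 0 := by
  classical
  set T : ℝ := 2 * ∑ s : Fin d, (1 - Real.cos (ϑ s)) with hT
  set l : Fin ν := ⟨ν - 1, by omega⟩ with hl
  rw [← Matrix.exists_mulVec_eq_zero_iff]
  constructor
  · rintro ⟨v, hv0, hv⟩
    by_contra hcon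
    push_neg at hcon
    obtain ⟨h1, hq⟩ := hcon
    have hlam : (1 : ℝ) - lam ≠ 0 := by
      intro h; exact h1 (by linarith)
    have hrow : ∀ j : Fin ν, (j : ℕ) < ν - 1 → (1 - lam) * v j - v l = 0 := by
      intro j hj
      have h := congrFun hv j
      rw [mulVec_lt hν ϑ lam v j hj] at h
      simpa using h
    have hvj : ∀ j : Fin ν, j ≠ l → v j = v l / (1 - lam) := by
      intro j hj
      have hjne : (j : ℕ) ≠ ν - 1 := by
        intro h; exact hj (Fin.ext (by simp [hl, h]))
      have hjlt : (j : ℕ) < ν - 1 := by have := j.isLt; omega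
      have h := hrow j hjlt
      field_simp
      linarith
    have hsum : ∑ k ∈ Finset.univ.erase l, v k = ((ν : ℝ) - 1) * (v l / (1 - lam)) := by
      rw [Finset.sum_congr rfl fun k hk => hvj k (Finset.mem_erase.mp hk).1,
        Finset.sum_const, Finset.card_erase_of_mem (Finset.mem_univ l),
        Finset.card_univ, Fintype.card_fin, nsmul_eq_mul,
        Nat.cast_sub (by omega : 1 ≤ ν), Nat.cast_one]
    have hP : (1 - lam) * ((ν : ℝ) - 1 + T - lam) - ((ν : ℝ) - 1) ≠ 0 := by
      intro h
      exact hq (by linear_combination h)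
    have hlastrow := congrFun hv l
    rw [hl, mulVec_last hν ϑ lam v] at hlastrow
    rw [← hl, ← hT, hsum] at hlastrow
    simp only [Pi.zero_apply] at hlastrow
    have h2 : v l * ((1 - lam) * ((ν : ℝ) - 1 + T - lam) - ((ν : ℝ) - 1)) = 0 := by
      field_simp at hlastrow
      linear_combination hlastrow
    have hvl : v l = 0 := by
      rcases mul_eq_zero.mp h2 with h | h
      · exact h
      · exact absurd h hP
    apply hv0
    funext j
    by_cases hj : j = l
    · rw [hj, hvl]; rfl
    · rw [hvj j hj, hvl, zero_div]; rfl
  · rintro (rfl | hq)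
    · -- lam = 1 : use e₀ - e₁
      set i0 : Fin ν := ⟨0, by omega⟩ with hi0
      set i1 : Fin ν := ⟨1, by omega⟩ with hi1
      refine ⟨Pi.single i0 (1 : ℝ) - Pi.single i1 1, ?_, ?_⟩
      · intro h
        have h0 := congrFun h i0
        have hne : i0 ≠ i1 := Fin.ne_of_val_ne (by simp [hi0, hi1])
        simp [Pi.single_eq_same, Pi.single_eq_of_ne hne] at h0
      · funext j
        set v : Fin ν → ℝ := Pi.single i0 (1 : ℝ) - Pi.single i1 1 with hv
        have hvl : v l = 0 := by
          have h0 : l ≠ i0 := Fin.ne_of_val_ne (by simp [hl, hi0]; omega)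
          have h1 : l ≠ i1 := Fin.ne_of_val_ne (by simp [hl, hi1]; omega)
          simp [hv, Pi.single_eq_of_ne h0, Pi.single_eq_of_ne h1]
        by_cases hj : (j : ℕ) < ν - 1
        · rw [mulVec_lt hν ϑ 1 v j hj, ← hl, hvl]
          simp
        · have hjl : j = l := Fin.ext (by simp [hl]; omega)
          rw [hjl, hl, mulVec_last hν ϑ 1 v, ← hl]
          rw [Finset.sum_erase_eq_sub (Finset.mem_univ l), hvl]
          have hsum0 : ∑ k : Fin ν, v k = 0 := by
            simp only [hv, Pi.sub_apply, Finset.sum_sub_distrib]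
            rw [Finset.sum_pi_single', Finset.sum_pi_single']
            simp
          rw [hsum0]
          simp
    · -- quadratic root : explicit eigenvector
      set v : Fin ν → ℝ := fun k => if (k : ℕ) = ν - 1 then 1 - lam else 1 with hv
      refine ⟨v, ?_, ?_⟩
      · intro h
        have h0 := congrFun h ⟨0, by omega⟩
        simp only [hv] at h0
        rw [if_neg (by omega)] at h0
        exact one_ne_zero h0
      · funext j
        by_cases hj : (j : ℕ) < ν - 1
        · rw [mulVec_lt hν ϑ lam v j hj, ← hl]
          have e1 : v j = 1 := by rw [hv]; exact if_neg (by omega)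
          have e2 : v l = 1 - lam := by rw [hv]; exact if_pos rfl
          rw [e1, e2]
          simp
        · have hjl : j = l := Fin.ext (by simp [hl]; omega)
          rw [hjl, hl, mulVec_last hν ϑ lam v, ← hl, ← hT]
          have e2 : v l = 1 - lam := by rw [hv]; exact if_pos rfl
          have hsum : ∑ k ∈ Finset.univ.erase l, v k = (ν : ℝ) - 1 := by
            have : ∀ k ∈ Finset.univ.erase l, v k = 1 := by
              intro k hk
              have hkl : k ≠ l := (Finset.mem_erase.mp hk).1
              have : (k : ℕ) ≠ ν - 1 := by
                intro h; exact hkl (Fin.ext (by simp [hl, h]))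
              rw [hv]; exact if_neg this
            rw [Finset.sum_congr rfl this, Finset.sum_const,
              Finset.card_erase_of_mem (Finset.mem_univ l),
              Finset.card_univ, Fintype.card_fin, nsmul_eq_mul,
              Nat.cast_sub (by omega : 1 ≤ ν), Nat.cast_one, mul_one]
          rw [e2, hsum]
          simp only [Pi.zero_apply]
          linear_combination hq

lemma T_range (hd : 1 ≤ d) (c : ℝ) :
    (∃ ϑ : Fin d → ℝ, 2 * ∑ s : Fin d, (1 - Real.cos (ϑ s)) = c) ↔ 0 ≤ c ∧ c ≤ 4 * d := by
  constructor
  · rintro ⟨ϑ, rfl⟩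
    have h1 : 0 ≤ ∑ s : Fin d, (1 - Real.cos (ϑ s)) :=
      Finset.sum_nonneg fun s _ => by nlinarith [Real.cos_le_one (ϑ s)]
    have h2 : ∑ s : Fin d, (1 - Real.cos (ϑ s)) ≤ ∑ _s : Fin d, (2 : ℝ) :=
      Finset.sum_le_sum fun s _ => by nlinarith [Real.neg_one_le_cos (ϑ s)]
    rw [Finset.sum_const, Finset.card_univ, Fintype.card_fin, nsmul_eq_mul] at h2
    constructor <;> linarith
  · rintro ⟨h0, h4⟩
    have hd' : (1 : ℝ) ≤ d := by exact_mod_cast hd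
    have hdpos : (0 : ℝ) < 2 * d := by linarith
    have hy1 : -1 ≤ 1 - c / (2 * d) := by
      have : c / (2 * d) ≤ 2 := by rw [div_le_iff₀ hdpos]; linarith
      linarith
    have hy2 : 1 - c / (2 * d) ≤ 1 := by
      have : 0 ≤ c / (2 * d) := div_nonneg h0 (le_of_lt hdpos)
      linarith
    refine ⟨fun _ => Real.arccos (1 - c / (2 * d)), ?_⟩
    simp only [Real.cos_arccos hy1 hy2]
    rw [Finset.sum_const, Finset.card_univ, Fintype.card_fin, nsmul_eq_mul]
    have hdne : (d : ℝ) ≠ 0 := by linarith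
    field_simp
    ring

set_option maxHeartbeats 1000000 in
lemma interval_iff (hν : 3 ≤ ν) (hd : 1 ≤ d) (lam : ℝ) :
    (∃ t : ℝ, 0 ≤ t ∧ t ≤ 4 * d ∧ lam ^ 2 - ((ν : ℝ) + t) * lam + t = 0) ↔
      (0 ≤ lam ∧ lam ≤ ((ν : ℝ) + 4 * d) / 2 -
          Real.sqrt ((((ν : ℝ) + 4 * d) / 2) ^ 2 - 4 * d)) ∨
      ((ν : ℝ) ≤ lam ∧ lam ≤ ((ν : ℝ) + 4 * d) / 2 +
          Real.sqrt ((((ν : ℝ) + 4 * d) / 2) ^ 2 - 4 * d)) := by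
  have hν' : (3 : ℝ) ≤ ν := by exact_mod_cast hν
  have hd' : (1 : ℝ) ≤ d := by exact_mod_cast hd
  set x : ℝ := ((ν : ℝ) + 4 * d) / 2 with hx
  have hD : (0 : ℝ) ≤ x ^ 2 - 4 * d := by rw [hx]; nlinarith
  set s : ℝ := Real.sqrt (x ^ 2 - 4 * d) with hsdef
  have hs0 : 0 ≤ s := Real.sqrt_nonneg _
  have hs : s ^ 2 = x ^ 2 - 4 * d := Real.sq_sqrt hD
  clear_value s
  clear hsdef
  have hxbig : (7 : ℝ) / 2 ≤ x := by rw [hx]; linarith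
  have hB1 : 1 < x + s := by linarith
  have hA1 : x - s < 1 := by nlinarith
  have hBν : (ν : ℝ) < x + s := by nlinarith
  have hA0 : 0 < x - s := by nlinarith
  constructor
  · rintro ⟨t, ht0, ht4, heq⟩
    have key : t * (1 - lam) = lam * ((ν : ℝ) - lam) := by linear_combination heq
    rcases lt_trichotomy lam 1 with hlt | heq1 | hgt
    · left
      constructor
      · by_contra h
        push_neg at h
        nlinarith [mul_nonneg ht0 (by linarith : (0 : ℝ) ≤ 1 - lam)]
      · by_contra h
        push_neg at h
        have h5 : lam * ((ν : ℝ) - lam) ≤ 4 * d * (1 - lam) := by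
          nlinarith [mul_le_mul_of_nonneg_right ht4 (by linarith : (0 : ℝ) ≤ 1 - lam)]
        nlinarith [mul_pos (by linarith : (0 : ℝ) < lam - (x - s))
          (by linarith : (0 : ℝ) < x + s - lam)]
    · exfalso
      rw [heq1] at heq
      nlinarith
    · right
      constructor
      · by_contra h
        push_neg at h
        nlinarith [mul_nonneg ht0 (by linarith : (0 : ℝ) ≤ lam - 1),
          mul_pos (by linarith : (0 : ℝ) < lam) (by linarith : (0 : ℝ) < (ν : ℝ) - lam)]
      · by_contra h
        push_neg at h
        have h5 : 4 * d * (1 - lam) ≤ lam * ((ν : ℝ) - lam) := by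
          nlinarith [mul_le_mul_of_nonpos_right ht4 (by linarith : 1 - lam ≤ 0)]
        nlinarith [mul_pos (by linarith : (0 : ℝ) < lam - (x - s))
          (by linarith : (0 : ℝ) < lam - (x + s))]
  · rintro (⟨h0, hA⟩ | ⟨hν2, hB⟩)
    · have hlt : lam < 1 := lt_of_le_of_lt hA hA1
      refine ⟨lam * ((ν : ℝ) - lam) / (1 - lam),
        div_nonneg (mul_nonneg h0 (by linarith)) (by linarith), ?_, ?_⟩
      · rw [div_le_iff₀ (by linarith : (0 : ℝ) < 1 - lam)]
        nlinarith [mul_nonneg (by linarith : (0 : ℝ) ≤ x - s - lam)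
          (by linarith : (0 : ℝ) ≤ x + s - lam)]
      · have hne : (1 : ℝ) - lam ≠ 0 := by linarith
        field_simp
        ring
    · have hgt : (1 : ℝ) < lam := by linarith
      refine ⟨lam * ((ν : ℝ) - lam) / (1 - lam), ?_, ?_, ?_⟩
      · rw [le_div_iff_of_neg (by linarith : 1 - lam < 0)]
        nlinarith
      · rw [div_le_iff_of_neg (by linarith : 1 - lam < 0)]
        nlinarith [mul_nonneg (by linarith : (0 : ℝ) ≤ lam - (x - s))
          (by linarith : (0 : ℝ) ≤ x + s - lam)]
      · have hne : (1 : ℝ) - lam ≠ 0 := by linarith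
        field_simp
        ring

lemma ker_ge (hν : 3 ≤ ν) (ϑ : Fin d → ℝ) :
    ν - 2 ≤ Module.finrank ℝ
      (LinearMap.ker (Matrix.toLin'
        (pendantFiber ν d ϑ - (1 : ℝ) • (1 : Matrix (Fin ν) (Fin ν) ℝ)))) := by
  classical
  set M : Matrix (Fin ν) (Fin ν) ℝ :=
    pendantFiber ν d ϑ - (1 : ℝ) • (1 : Matrix (Fin ν) (Fin ν) ℝ) with hM
  set L := Matrix.toLin' M with hL
  set l : Fin ν := ⟨ν - 1, by omega⟩ with hl
  set u : Fin ν → ℝ := fun _ => 1 with hu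
  set e : Fin ν → ℝ := fun k => if k = l then 1 else 0 with he
  have hrange : LinearMap.range L ≤ Submodule.span ℝ {u, e} := by
    rintro y ⟨v, rfl⟩
    rw [Submodule.mem_span_pair]
    refine ⟨-(v l), L v l + v l, ?_⟩
    funext j
    have hLv : ∀ k, L v k = M.mulVec v k := fun k => by rw [hL, Matrix.toLin'_apply]
    by_cases hj : (j : ℕ) < ν - 1
    · have h1 : L v j = (1 - 1) * v j - v l := by
        rw [hLv j, hM]; exact mulVec_lt hν ϑ 1 v j hj
      have hjl : j ≠ l := by
        intro h; rw [h] at hj; simp [hl] at hj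
      simp only [Pi.add_apply, Pi.smul_apply, hu, he, if_neg hjl, smul_eq_mul]
      rw [h1]; ring
    · have hjl : j = l := Fin.ext (by simp [hl]; omega)
      simp only [Pi.add_apply, Pi.smul_apply, hu, he, hjl, if_pos rfl, smul_eq_mul, if_true]
      ring
  have h2 : Module.finrank ℝ (LinearMap.range L) ≤ 2 := by
    refine le_trans (Submodule.finrank_mono hrange) ?_
    have hc : Submodule.span ℝ ({u, e} : Set (Fin ν → ℝ))
        = Submodule.span ℝ (({u, e} : Finset (Fin ν → ℝ)) : Set (Fin ν → ℝ)) := by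
      simp
    rw [hc]
    exact le_trans (finrank_span_finset_le_card _)
      (le_trans (Finset.card_insert_le _ _) (by simp))
  have h3 := LinearMap.finrank_range_add_finrank_ker L
  rw [Module.finrank_pi, Fintype.card_fin] at h3
  omega

end Aux

/-- (a) `1` is an eigenvalue of `Δ(ϑ)` of multiplicity at least `ν − 2`
for every `ϑ`; (b) with `x = (ν + 4d)/2`, the spectrum is
`[0, x − √(x² − 4d)] ∪ {1} ∪ [ν, x + √(x² − 4d)]`. -/
theorem pendant_laplacian_spectrum (ν d : ℕ) (hν : 3 ≤ ν) (hd : 1 ≤ d) :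
    (∀ ϑ : Fin d → ℝ,
        ν - 2 ≤ Module.finrank ℝ
          (LinearMap.ker (Matrix.toLin'
            (pendantFiber ν d ϑ - (1 : ℝ) • (1 : Matrix (Fin ν) (Fin ν) ℝ))))) ∧
    {lam : ℝ | ∃ ϑ : Fin d → ℝ,
        (pendantFiber ν d ϑ - lam • (1 : Matrix (Fin ν) (Fin ν) ℝ)).det = 0} =
      Set.Icc (0 : ℝ) (((ν : ℝ) + 4 * d) / 2 -
          Real.sqrt ((((ν : ℝ) + 4 * d) / 2) ^ 2 - 4 * d)) ∪
        {1} ∪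
        Set.Icc (ν : ℝ) (((ν : ℝ) + 4 * d) / 2 +
          Real.sqrt ((((ν : ℝ) + 4 * d) / 2) ^ 2 - 4 * d)) := by
  constructor
  · intro ϑ
    exact ker_ge hν ϑ
  · ext lam
    simp only [Set.mem_setOf_eq, Set.mem_union, Set.mem_singleton_iff, Set.mem_Icc]
    constructor
    · rintro ⟨ϑ, hdet⟩
      rcases (det_iff hν ϑ lam).mp hdet with h1 | hq
      · exact Or.inl (Or.inr h1)
      · have hT := (T_range hd (2 * ∑ s : Fin d, (1 - Real.cos (ϑ s)))).mp ⟨ϑ, rfl⟩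
        rcases (interval_iff hν hd lam).mp
            ⟨2 * ∑ s : Fin d, (1 - Real.cos (ϑ s)), hT.1, hT.2, hq⟩ with h | h
        · exact Or.inl (Or.inl h)
        · exact Or.inr h
    · rintro ((h | h1) | h)
      · obtain ⟨t, ht0, ht4, hq⟩ := (interval_iff hν hd lam).mpr (Or.inl h)
        obtain ⟨ϑ, hϑ⟩ := (T_range hd t).mpr ⟨ht0, ht4⟩
        exact ⟨ϑ, (det_iff hν ϑ lam).mpr (Or.inr (by rw [hϑ]; exact hq))⟩
      · exact ⟨fun _ => 0, (det_iff hν (fun _ => 0) lam).mpr (Or.inl h1)⟩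
      · obtain ⟨t, ht0, ht4, hq⟩ := (interval_iff hν hd lam).mpr (Or.inr h)
        obtain ⟨ϑ, hϑ⟩ := (T_range hd t).mpr ⟨ht0, ht4⟩
        exact ⟨ϑ, (det_iff hν ϑ lam).mpr (Or.inr (by rw [hϑ]; exact hq))⟩
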